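/- arXiv:2605.01961 — 4 statements merged into one kernel-verified Lean document; each statement's English description precedes it below -/
import Mathlib

section
/- Let s, ŝ ∈ [0,1]^{D×K} be two score matrices such that |s_{d,a} − ŝ_{d,a}| ≤ η for all users d ∈ [D] and arms a ∈ [K], for some η ≥ 0. Let π* be a maximizer of NSW(·, s) over Δ^K and let π̂ be a maximizer of NSW(·, ŝ) over Δ^K. Then NSW(π*, s) − NSW(π̂, s) ≤ 2·D·η. -/
open Finset

/-- The Nash social welfare of a policy `π` under score matrix `s`. -/
def NSW {D K : ℕ} (π : Fin K → ℝ) (s : Fin D → Fin K → ℝ) : ℝ :=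
  ∏ d, ∑ a, π a * s d a

/-- A policy is a probability vector over the `K` arms. -/
def IsPolicy {K : ℕ} (π : Fin K → ℝ) : Prop :=
  (∀ a, 0 ≤ π a) ∧ ∑ a, π a = 1

/-!
`NSW(π*, s) ≤ NSW(π*, ŝ) + Dη ≤ NSW(π̂, ŝ) + Dη ≤ NSW(π̂, s) + 2Dη`, the middle step by optimality
of `π̂` for `ŝ`. For the outer steps: each utility `u_d(π)` is an average of scores, so it lies in `[0, 1]`
and moves by at most `η` when `s` is replaced by `ŝ`; a product of `D` factors in `[0, 1]`, each
moved by at most `η`, moves by at most `Dη`.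
-/

theorem Finset.prod_sub_prod_le_card_mul {ι R : Type*} [CommRing R] [LinearOrder R]
    [IsStrictOrderedRing R] (t : Finset ι) {a b : ι → R} {η : R} (hη : 0 ≤ η)
    (ha : ∀ i ∈ t, a i ∈ Set.Icc 0 1) (hb : ∀ i ∈ t, b i ∈ Set.Icc 0 1)
    (hab : ∀ i ∈ t, a i - b i ≤ η) :
    ∏ i ∈ t, a i - ∏ i ∈ t, b i ≤ #t * η := by
  classical
  induction t using Finset.induction_on with
  | empty => simp
  | insert j t hj ih =>
    obtain ⟨haj₀, haj₁⟩ := ha j (mem_insert_self j t)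
    have hbj := hab j (mem_insert_self j t)
    have ih := ih (fun i hi => ha i (mem_insert_of_mem hi)) (fun i hi => hb i (mem_insert_of_mem hi))
      (fun i hi => hab i (mem_insert_of_mem hi))
    have hB₀ : 0 ≤ ∏ i ∈ t, b i := prod_nonneg fun i hi => (hb i (mem_insert_of_mem hi)).1
    have hB₁ : ∏ i ∈ t, b i ≤ 1 :=
      prod_le_one (fun i hi => (hb i (mem_insert_of_mem hi)).1)
        (fun i hi => (hb i (mem_insert_of_mem hi)).2)
    rw [prod_insert hj, prod_insert hj, card_insert_of_notMem hj, Nat.cast_succ]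
    -- `a j A - b j B = a j (A - B) + (a j - b j) B`, with `a j, B ∈ [0, 1]`
    nlinarith [mul_nonneg haj₀ (sub_nonneg.2 ih), mul_nonneg (sub_nonneg.2 haj₁)
      (mul_nonneg (Nat.cast_nonneg (α := R) #t) hη), mul_nonneg (sub_nonneg.2 hbj) hB₀,
      mul_nonneg (sub_nonneg.2 hB₁) hη]

namespace IsPolicy

variable {K : ℕ} {π : Fin K → ℝ}

theorem sum_mul_mem_Icc (hπ : IsPolicy π) {x : Fin K → ℝ} (hx : ∀ a, x a ∈ Set.Icc 0 1) :
    ∑ a, π a * x a ∈ Set.Icc 0 1 := by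
  refine ⟨sum_nonneg fun a _ => mul_nonneg (hπ.1 a) (hx a).1, ?_⟩
  calc ∑ a, π a * x a ≤ ∑ a, π a := sum_le_sum fun a _ => mul_le_of_le_one_right (hπ.1 a) (hx a).2
    _ = 1 := hπ.2

theorem sum_mul_sub_sum_mul_le (hπ : IsPolicy π) {x y : Fin K → ℝ} {η : ℝ}
    (hxy : ∀ a, x a - y a ≤ η) :
    ∑ a, π a * x a - ∑ a, π a * y a ≤ η :=
  calc ∑ a, π a * x a - ∑ a, π a * y a = ∑ a, π a * (x a - y a) := by
        simp only [mul_sub, sum_sub_distrib]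
    _ ≤ ∑ a, π a * η := sum_le_sum fun a _ => mul_le_mul_of_nonneg_left (hxy a) (hπ.1 a)
    _ = η := by rw [← sum_mul, hπ.2, one_mul]

theorem nsw_sub_nsw_le {D : ℕ} (hπ : IsPolicy π) {s s' : Fin D → Fin K → ℝ} {η : ℝ}
    (hη : 0 ≤ η) (hs : ∀ d a, s d a ∈ Set.Icc 0 1) (hs' : ∀ d a, s' d a ∈ Set.Icc 0 1)
    (hss' : ∀ d a, s d a - s' d a ≤ η) :
    NSW π s - NSW π s' ≤ D * η := by
  simpa only [NSW, card_univ, Fintype.card_fin] using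
    prod_sub_prod_le_card_mul univ hη (fun d _ => hπ.sum_mul_mem_Icc (hs d))
      (fun d _ => hπ.sum_mul_mem_Icc (hs' d)) (fun d _ => hπ.sum_mul_sub_sum_mul_le (hss' d))

end IsPolicy

theorem nsw_empirical_maximizer_bound_general (D K : ℕ) (η : ℝ) (hη : 0 ≤ η)
    (s shat : Fin D → Fin K → ℝ)
    (hs : ∀ d a, s d a ∈ Set.Icc (0 : ℝ) 1)
    (hshat : ∀ d a, shat d a ∈ Set.Icc (0 : ℝ) 1)
    (hclose : ∀ d a, |s d a - shat d a| ≤ η)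
    (πstar πhat : Fin K → ℝ)
    (hπstar : IsPolicy πstar) (hπhat : IsPolicy πhat)
    (hopt' : ∀ π : Fin K → ℝ, IsPolicy π → NSW π shat ≤ NSW πhat shat) :
    NSW πstar s - NSW πhat s ≤ 2 * D * η := by
  have hstar : NSW πstar s - NSW πstar shat ≤ D * η :=
    hπstar.nsw_sub_nsw_le hη hs hshat fun d a => (abs_sub_le_iff.1 (hclose d a)).1
  have hhat : NSW πhat shat - NSW πhat s ≤ D * η :=
    hπhat.nsw_sub_nsw_le hη hshat hs fun d a => (abs_sub_le_iff.1 (hclose d a)).2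
  have hopt_hat : NSW πstar shat ≤ NSW πhat shat := hopt' πstar hπstar
  linarith

/-- If the two score matrices `s, ŝ ∈ [0,1]^{D×K}` are entrywise within `η ≥ 0`
of each other, `π*` maximizes `NSW(·, s)` over the simplex and `π̂` maximizes `NSW(·, ŝ)`
over the simplex, then `NSW(π*, s) − NSW(π̂, s) ≤ 2·D·η`. -/
theorem nsw_empirical_maximizer_bound (D K : ℕ) (η : ℝ) (hη : 0 ≤ η)
    (s shat : Fin D → Fin K → ℝ)
    (hs : ∀ d a, s d a ∈ Set.Icc (0 : ℝ) 1)
    (hshat : ∀ d a, shat d a ∈ Set.Icc (0 : ℝ) 1)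
    (hclose : ∀ d a, |s d a - shat d a| ≤ η)
    (πstar πhat : Fin K → ℝ)
    (hπstar : IsPolicy πstar) (hπhat : IsPolicy πhat)
    (hopt : ∀ π : Fin K → ℝ, IsPolicy π → NSW π s ≤ NSW πstar s)
    (hopt' : ∀ π : Fin K → ℝ, IsPolicy π → NSW π shat ≤ NSW πhat shat) :
    NSW πstar s - NSW πhat s ≤ 2 * D * η :=
  nsw_empirical_maximizer_bound_general D K η hη s shat hs hshat hclose πstar πhat hπstar hπhat
    hopt'
end

section
/- Let s ∈ [0,1]^{D×K} be a score matrix, π ∈ Δ^K a policy, and b ≠ g two arms with δ = π(b). Suppose there are a subset J ⊆ [D] and an injective map φ : J → [D] with φ(J) ∩ J = ∅ such that: (i) for every j ∈ J, writing i = φ(j), one has s_{i,b} = 0, s_{i,g} = 1, s_{j,g} ≥ 1/2, and s_{j,a} ≥ (1/2)·s_{i,a} for every arm a ≠ b; and (ii) for every user d ∉ J ∪ φ(J), s_{d,g} ≥ s_{d,b}. Define the policy π' by π'(b) = 0, π'(g) = π(g) + δ, and π'(a) = π(a) for all other arms a. Then NSW(π', s) ≥ NSW(π, s). -/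
open Finset

/-!
Moving the mass `δ = π b` from `b` to `g` changes the utility of user `d` by
`δ (s d g - s d b)`. Users outside the pairs gain. For a pair `(j, φ j)` the user `φ j` gains
exactly `δ`, while `j` may lose up to `δ`; but `j` already had at least half of the utility of
`φ j` without counting arm `b`, and this is enough for the product of the two utilities not to
decrease. Since the pairs are disjoint, the Nash social welfare factors over pairs and singletons.
-/

section Pairing

variable {ι : Type*} [Fintype ι] [DecidableEq ι]

theorem prod_eq_prod_pairs_mul_prod_compl (f : ι → ℝ) {J : Finset ι} {φ : ι → ι}
    (hφinj : Set.InjOn φ J) (hφdisj : ∀ j ∈ J, φ j ∉ J) :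
    ∏ d, f d = (∏ j ∈ J, f j * f (φ j)) * ∏ d ∈ (J ∪ J.image φ)ᶜ, f d := by
  have hdisj : Disjoint J (J.image φ) := by
    refine disjoint_left.2 fun d hdJ hdφ => ?_
    obtain ⟨j, hj, rfl⟩ := mem_image.1 hdφ
    exact hφdisj j hj hdJ
  rw [← prod_mul_prod_compl (J ∪ J.image φ) f, prod_union hdisj,
    prod_image fun x hx y hy => hφinj hx hy, prod_mul_distrib]

theorem prod_le_prod_of_pairs {f f' : ι → ℝ} (hf : ∀ d, 0 ≤ f d) {J : Finset ι} {φ : ι → ι}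
    (hφinj : Set.InjOn φ J) (hφdisj : ∀ j ∈ J, φ j ∉ J)
    (hpair : ∀ j ∈ J, f j * f (φ j) ≤ f' j * f' (φ j))
    (hrest : ∀ d, d ∉ J → d ∉ J.image φ → f d ≤ f' d) :
    ∏ d, f d ≤ ∏ d, f' d := by
  rw [prod_eq_prod_pairs_mul_prod_compl f hφinj hφdisj,
    prod_eq_prod_pairs_mul_prod_compl f' hφinj hφdisj]
  have hpair_nonneg : ∀ j ∈ J, 0 ≤ f j * f (φ j) := fun j _ => mul_nonneg (hf j) (hf (φ j))
  refine mul_le_mul (prod_le_prod hpair_nonneg hpair) (prod_le_prod (fun d _ => hf d) ?_)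
    (prod_nonneg fun d _ => hf d)
    (prod_nonneg fun j hj => (hpair_nonneg j hj).trans (hpair j hj))
  intro d hd
  simp only [mem_compl, mem_union, not_or] at hd
  exact hrest d hd.1 hd.2

end Pairing

section Transfer

variable {ι : Type*} [Fintype ι] [DecidableEq ι]

def transferMass (π : ι → ℝ) (b g : ι) : ι → ℝ :=
  fun a => if a = b then 0 else if a = g then π g + π b else π a

theorem sum_transferMass_mul {b g : ι} (hbg : b ≠ g) (π x : ι → ℝ) :
    ∑ a, transferMass π b g a * x a = ∑ a, π a * x a + π b * (x g - x b) := by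
  have hterm : ∀ a, transferMass π b g a * x a =
      π a * x a + ((if a = g then π b * x a else 0) - if a = b then π b * x a else 0) := by
    intro a
    rcases eq_or_ne a b with rfl | hab
    · simp [transferMass, hbg]
    rcases eq_or_ne a g with rfl | hag
    · simp only [transferMass, hab, if_false, if_true, sub_zero]
      ring
    · simp [transferMass, hab, hag]
  simp only [hterm, sum_add_distrib, sum_sub_distrib, sum_ite_eq', mem_univ, if_true]
  ring

end Transfer

theorem mul_sum_le_sum_sub_of_forall_ne {ι : Type*} [Fintype ι] [DecidableEq ι]
    {π x y : ι → ℝ} (hπ : ∀ a, 0 ≤ π a) {b : ι} {c : ℝ} (hyb : y b = 0)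
    (hxy : ∀ a, a ≠ b → c * y a ≤ x a) :
    c * ∑ a, π a * y a ≤ ∑ a, π a * x a - π b * x b := by
  rw [← add_sum_erase univ _ (mem_univ b), ← add_sum_erase univ (fun a => π a * x a) (mem_univ b),
    hyb, mul_zero, zero_add, add_sub_cancel_left, mul_sum]
  refine sum_le_sum fun a ha => ?_
  nlinarith [hxy a (ne_of_mem_erase ha), hπ a]

/-- `x`, `y` are the utilities of `j` and `φ j`; `p`, `q` are the scores of `j` for `b` and `g`. -/
theorem mul_le_mul_after_transfer {x y δ p q : ℝ} (hδ : 0 ≤ δ) (hy : 0 ≤ y)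
    (hxy : 1 / 2 * y ≤ x - δ * p) (hp : p ≤ 1) (hq : 1 / 2 ≤ q) :
    x * y ≤ (x + δ * (q - p)) * (y + δ) := by
  nlinarith [mul_nonneg hδ hy, mul_nonneg (mul_nonneg hδ hy) (sub_nonneg.2 hp),
    mul_nonneg (mul_nonneg hδ hδ) (sub_nonneg.2 hq), mul_nonneg hδ hδ]

theorem nsw_transfer_mass_general (D K : ℕ)
    (s : Fin D → Fin K → ℝ)
    (hs : ∀ d a, s d a ∈ Set.Icc (0 : ℝ) 1)
    (π : Fin K → ℝ) (hπ0 : ∀ a, 0 ≤ π a)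
    (b g : Fin K) (hbg : b ≠ g)
    (J : Finset (Fin D)) (φ : Fin D → Fin D)
    (hφinj : Set.InjOn φ J)
    (hφdisj : ∀ j ∈ J, φ j ∉ J)
    (hpairs : ∀ j ∈ J,
      s (φ j) b = 0 ∧ s (φ j) g = 1 ∧ 1 / 2 ≤ s j g ∧
      ∀ a, a ≠ b → (1 / 2) * s (φ j) a ≤ s j a)
    (hrest : ∀ d, d ∉ J → d ∉ J.image φ → s d b ≤ s d g)
    (π' : Fin K → ℝ)
    (hπ' : π' = fun a => if a = b then 0 else if a = g then π g + π b else π a) :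
    NSW π s ≤ NSW π' s := by
  change π' = transferMass π b g at hπ'
  subst hπ'
  unfold NSW
  simp only [sum_transferMass_mul hbg]
  refine prod_le_prod_of_pairs
    (fun d => sum_nonneg fun a _ => mul_nonneg (hπ0 a) (hs d a).1) hφinj hφdisj ?_ ?_
  · intro j hj
    obtain ⟨hφb, hφg, hjg, hjφ⟩ := hpairs j hj
    rw [hφb, hφg, sub_zero, mul_one]
    exact mul_le_mul_after_transfer (hπ0 b)
      (sum_nonneg fun a _ => mul_nonneg (hπ0 a) (hs (φ j) a).1)
      (mul_sum_le_sum_sub_of_forall_ne hπ0 hφb hjφ) (hs j b).2 hjg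
  · intro d hdJ hdφ
    have := mul_nonneg (hπ0 b) (sub_nonneg.2 (hrest d hdJ hdφ))
    linarith

/-- Remark 1 of the lower-bound proof: transferring all of the probability
mass from a "bad" winner arm `b` to a "good" winner arm `g` does not decrease the Nash
social welfare, where each user whose winner is `b` (a user `φ j`, `j ∈ J`) is paired with
a distinct user `j ∈ J` whose winner is `g`. -/
theorem nsw_transfer_mass (D K : ℕ)
    (s : Fin D → Fin K → ℝ)
    (hs : ∀ d a, s d a ∈ Set.Icc (0 : ℝ) 1)
    (π : Fin K → ℝ) (hπ0 : ∀ a, 0 ≤ π a) (hπ1 : ∑ a, π a = 1)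
    (b g : Fin K) (hbg : b ≠ g)
    (J : Finset (Fin D)) (φ : Fin D → Fin D)
    (hφinj : Set.InjOn φ J)
    (hφdisj : ∀ j ∈ J, φ j ∉ J)
    (hpairs : ∀ j ∈ J,
      s (φ j) b = 0 ∧ s (φ j) g = 1 ∧ 1 / 2 ≤ s j g ∧
      ∀ a, a ≠ b → (1 / 2) * s (φ j) a ≤ s j a)
    (hrest : ∀ d, d ∉ J → d ∉ J.image φ → s d b ≤ s d g)
    (π' : Fin K → ℝ)
    (hπ' : π' = fun a => if a = b then 0 else if a = g then π g + π b else π a) :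
    NSW π s ≤ NSW π' s :=
  nsw_transfer_mass_general D K s hs π hπ0 b g hbg J φ hφinj hφdisj hpairs hrest π' hπ'
end

section
/- Consider the lower-bound instance I^m with parameters ε ∈ (0, 0.2) and ε' ∈ (0, 0.05), in which the map d ↦ a*_d is injective and the set of bad winners A* \ Ā is nonempty. Then for every policy π ∈ Δ^K satisfying π(a) = 0 for every bad winner arm a ∈ A* \ Ā, there exists a user d ∉ D̄ such that Σ_{a=1}^K π(a) s^m_{d,a} ≤ 1 − 2ε' − 2(1 − π(m))·ε; consequently NSW(π, s^m) ≤ 1 − 2(1 − π(m))·ε. -/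
open Finset

/-- In the lower-bound instance `I^m` (with at least one bad winner), any
policy placing no mass on bad winners leaves some user `d ∉ D̄` with utility at most
`1 − 2ε' − 2(1 − π(m))ε`, and consequently `NSW(π, s^m) ≤ 1 − 2(1 − π(m))ε`. -/
theorem instance_m_nsw_upper_bound (D K : ℕ) (ε ε' : ℝ)
    (hε : ε ∈ Set.Ioo (0 : ℝ) 0.2) (hε' : ε' ∈ Set.Ioo (0 : ℝ) 0.05)
    (Astar Abar : Finset (Fin K)) (hsub : Abar ⊆ Astar)
    (astar : Fin D → Fin K) (hinj : Function.Injective astar)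
    (honto : Astar = Finset.image astar Finset.univ)
    (m : Fin K) (hm : m ∈ Abar)
    (hbadne : (Astar \ Abar).Nonempty)
    (s : Fin D → Fin K → ℝ)
    (hgood : ∀ d, astar d ∈ Abar →
      s d (astar d) = 1 ∧
      (∀ a ∈ Abar, a ≠ astar d → s d a = 1 - 2 * ε') ∧
      (∀ a ∉ Abar, s d a = 0))
    (hbad : ∀ d, astar d ∉ Abar →
      s d (astar d) = 1 ∧
      s d m = 1 - 2 * ε' ∧
      (∀ a ∈ Abar, a ≠ m → s d a = 1 - 2 * (ε' + ε)) ∧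
      (∀ a ∉ Abar, a ≠ astar d → s d a = 0))
    (π : Fin K → ℝ) (hπ0 : ∀ a, 0 ≤ π a) (hπ1 : ∑ a, π a = 1)
    (hπbad : ∀ a ∈ Astar \ Abar, π a = 0) :
    (∃ d, astar d ∉ Abar ∧ ∑ a, π a * s d a ≤ 1 - 2 * ε' - 2 * (1 - π m) * ε) ∧
    NSW π s ≤ 1 - 2 * (1 - π m) * ε := by
  obtain ⟨hε0, hε2⟩ := hε
  obtain ⟨hε'0, hε'2⟩ := hε'
  norm_num at hε2 hε'2
  obtain ⟨a0, ha0⟩ := hbadne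
  rw [Finset.mem_sdiff] at ha0
  have ha0A := ha0.1
  rw [honto, Finset.mem_image] at ha0A
  obtain ⟨d, -, hd⟩ := ha0A
  have hdbad : astar d ∉ Abar := hd ▸ ha0.2
  have hs01 : ∀ d' a, 0 ≤ s d' a ∧ s d' a ≤ 1 := by
    intro d' a
    by_cases hdb : astar d' ∈ Abar
    · obtain ⟨h1, h2, h3⟩ := hgood d' hdb
      by_cases hA : a ∈ Abar
      · by_cases he : a = astar d'
        · rw [he, h1]; norm_num
        · rw [h2 a hA he]; constructor <;> linarith
      · rw [h3 a hA]; norm_num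
    · obtain ⟨h1, h2, h3, h4⟩ := hbad d' hdb
      by_cases he : a = astar d'
      · rw [he, h1]; norm_num
      · by_cases hA : a ∈ Abar
        · by_cases hem : a = m
          · rw [hem, h2]; constructor <;> linarith
          · rw [h3 a hA hem]; constructor <;> linarith
        · rw [h4 a hA he]; norm_num
  have hfac : ∀ d', 0 ≤ ∑ a, π a * s d' a ∧ ∑ a, π a * s d' a ≤ 1 := by
    intro d'
    constructor
    · exact Finset.sum_nonneg fun a _ => mul_nonneg (hπ0 a) (hs01 d' a).1
    · calc ∑ a, π a * s d' a ≤ ∑ a, π a * 1 :=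
            Finset.sum_le_sum fun a _ => mul_le_mul_of_nonneg_left (hs01 d' a).2 (hπ0 a)
        _ = 1 := by simpa using hπ1
  obtain ⟨h1, h2, h3, h4⟩ := hbad d hdbad
  have hπd : π (astar d) = 0 := by
    apply hπbad
    rw [Finset.mem_sdiff]
    exact ⟨hd ▸ ha0.1, hdbad⟩
  have hsplit : ∑ a, π a * s d a = ∑ a ∈ Abar, π a * s d a := by
    refine (Finset.sum_subset (Finset.subset_univ Abar) ?_).symm
    intro a _ hA
    by_cases he : a = astar d
    · rw [he, hπd, zero_mul]
    · rw [h4 a hA he, mul_zero]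
  have hsum2 : ∑ a ∈ Abar, π a * s d a
      = π m * (1 - 2*ε') + (∑ a ∈ Abar.erase m, π a) * (1 - 2*(ε'+ε)) := by
    rw [← Finset.add_sum_erase _ _ hm, h2, Finset.sum_mul]
    congr 1
    refine Finset.sum_congr rfl fun a ha => ?_
    rw [h3 a (Finset.mem_of_mem_erase ha) (Finset.ne_of_mem_erase ha)]
  have hT0 : 0 ≤ ∑ a ∈ Abar.erase m, π a :=
    Finset.sum_nonneg fun a _ => hπ0 a
  have hT1 : π m + ∑ a ∈ Abar.erase m, π a ≤ 1 := by
    rw [Finset.add_sum_erase _ _ hm, ← hπ1]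
    exact Finset.sum_le_sum_of_subset_of_nonneg (Finset.subset_univ Abar)
      fun a _ _ => hπ0 a
  set T := ∑ a ∈ Abar.erase m, π a with hTdef
  have hkey : ∑ a, π a * s d a ≤ 1 - 2 * ε' - 2 * (1 - π m) * ε := by
    rw [hsplit, hsum2]
    nlinarith [hπ0 m]
  refine ⟨⟨d, hdbad, hkey⟩, ?_⟩
  have hNSW : NSW π s = (∑ a, π a * s d a) * ∏ d' ∈ Finset.univ.erase d, ∑ a, π a * s d' a := by
    rw [NSW, ← Finset.mul_prod_erase _ _ (Finset.mem_univ d)]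
  have hP0 : 0 ≤ ∏ d' ∈ Finset.univ.erase d, ∑ a, π a * s d' a :=
    Finset.prod_nonneg fun d' _ => (hfac d').1
  have hP1 : ∏ d' ∈ Finset.univ.erase d, ∑ a, π a * s d' a ≤ 1 :=
    Finset.prod_le_one (fun d' _ => (hfac d').1) (fun d' _ => (hfac d').2)
  have hfd0 := (hfac d).1
  have hπm1 : π m ≤ 1 := by
    rw [← hπ1]
    exact Finset.single_le_sum (fun a _ => hπ0 a) (Finset.mem_univ m)
  calc NSW π s ≤ ∑ a, π a * s d a := by
        rw [hNSW]; nlinarith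
    _ ≤ 1 - 2 * ε' - 2 * (1 - π m) * ε := hkey
    _ ≤ 1 - 2 * (1 - π m) * ε := by linarith
end

section
/- Consider the lower-bound instance I^m with parameters ε ∈ (0, 0.2) and ε' ∈ (0, 0.05), in which the map d ↦ a*_d is injective and the set of bad winners A* \ Ā is nonempty. Let π_m ∈ Δ^K be the deterministic policy with π_m(m) = 1. Then for any two policies π, π' ∈ Δ^K that place zero probability on every bad winner arm in A* \ Ā, the instantaneous regret satisfies NSW(π_m, s^m) − (NSW(π, s^m) + NSW(π', s^m))/2 ≥ −2ε'D + ε·(1 − (π(m)+π'(m))/2)·2 = −2ε'D + ε(2 − π(m) − π'(m)). -/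
open Finset

/-- In the lower-bound instance `I^m` (with at least one bad winner), for any
two policies `π, π'` placing no mass on bad winners, the instantaneous regret against the
deterministic policy `π_m` satisfies
`NSW(π_m, s^m) − (NSW(π, s^m) + NSW(π', s^m))/2 ≥ −2ε'D + ε(2 − π(m) − π'(m))`. -/
theorem instance_m_instantaneous_regret_lower_bound (D K : ℕ) (ε ε' : ℝ)
    (hε : ε ∈ Set.Ioo (0 : ℝ) 0.2) (hε' : ε' ∈ Set.Ioo (0 : ℝ) 0.05)
    (Astar Abar : Finset (Fin K)) (hsub : Abar ⊆ Astar)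
    (astar : Fin D → Fin K) (hinj : Function.Injective astar)
    (honto : Astar = Finset.image astar Finset.univ)
    (m : Fin K) (hm : m ∈ Abar)
    (hbadne : (Astar \ Abar).Nonempty)
    (s : Fin D → Fin K → ℝ)
    (hgood : ∀ d, astar d ∈ Abar →
      s d (astar d) = 1 ∧
      (∀ a ∈ Abar, a ≠ astar d → s d a = 1 - 2 * ε') ∧
      (∀ a ∉ Abar, s d a = 0))
    (hbad : ∀ d, astar d ∉ Abar →
      s d (astar d) = 1 ∧
      s d m = 1 - 2 * ε' ∧
      (∀ a ∈ Abar, a ≠ m → s d a = 1 - 2 * (ε' + ε)) ∧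
      (∀ a ∉ Abar, a ≠ astar d → s d a = 0))
    (πm : Fin K → ℝ) (hπm : πm = fun a => if a = m then (1 : ℝ) else 0)
    (π π' : Fin K → ℝ)
    (hπ0 : ∀ a, 0 ≤ π a) (hπ1 : ∑ a, π a = 1)
    (hπ'0 : ∀ a, 0 ≤ π' a) (hπ'1 : ∑ a, π' a = 1)
    (hπbad : ∀ a ∈ Astar \ Abar, π a = 0)
    (hπ'bad : ∀ a ∈ Astar \ Abar, π' a = 0) :
    NSW πm s - (NSW π s + NSW π' s) / 2 ≥
      -2 * ε' * D + ε * (2 - π m - π' m) := by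
  obtain ⟨hε0, hε2⟩ := hε
  obtain ⟨hε'0, hε'2⟩ := hε'
  norm_num at hε2 hε'2
  -- bounds on s
  have hs01 : ∀ d a, 0 ≤ s d a ∧ s d a ≤ 1 := by
    intro d a
    by_cases hd : astar d ∈ Abar
    · obtain ⟨h1, h2, h3⟩ := hgood d hd
      by_cases ha : a ∈ Abar
      · by_cases hae : a = astar d
        · rw [hae, h1]; norm_num
        · rw [h2 a ha hae]; constructor <;> linarith
      · rw [h3 a ha]; norm_num
    · obtain ⟨h1, h2, h3, h4⟩ := hbad d hd
      by_cases hae : a = astar d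
      · rw [hae, h1]; norm_num
      · by_cases ha : a ∈ Abar
        · by_cases ham : a = m
          · rw [ham, h2]; constructor <;> linarith
          · rw [h3 a ha ham]; constructor <;> linarith
        · rw [h4 a ha hae]; norm_num
  have hsm : ∀ d, 1 - 2 * ε' ≤ s d m := by
    intro d
    by_cases hd : astar d ∈ Abar
    · obtain ⟨h1, h2, h3⟩ := hgood d hd
      by_cases hme : m = astar d
      · rw [hme, h1]; linarith
      · rw [h2 m hm hme]
    · rw [(hbad d hd).2.1]
  have hNSWm : NSW πm s = ∏ d, s d m := by
    unfold NSW
    apply Finset.prod_congr rfl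
    intro d _
    rw [hπm]
    simp
  have hπmlb : (1 : ℝ) - 2 * ε' * D ≤ NSW πm s := by
    rw [hNSWm]
    have h1 : (1 - 2 * ε') ^ D ≤ ∏ d : Fin D, s d m := by
      calc (1 - 2 * ε') ^ D = ∏ _d : Fin D, (1 - 2 * ε') := by
            rw [Finset.prod_const, Finset.card_univ, Fintype.card_fin]
        _ ≤ ∏ d : Fin D, s d m := by
            apply Finset.prod_le_prod
            · intro i _; linarith
            · intro i _; exact hsm i
    have h2 : 1 + (D : ℝ) * (-(2 * ε')) ≤ (1 + (-(2 * ε'))) ^ D :=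
      one_add_mul_le_pow (by linarith) D
    have h3 : (1 + (-(2 * ε'))) ^ D = (1 - 2 * ε') ^ D := by ring_nf
    nlinarith [h1, h2]
  -- find bad user d0
  obtain ⟨a0, ha0⟩ := hbadne
  have ha0' := ha0
  rw [Finset.mem_sdiff] at ha0'
  obtain ⟨ha0A, ha0nA⟩ := ha0'
  rw [honto, Finset.mem_image] at ha0A
  obtain ⟨d0, _, hd0⟩ := ha0A
  have hd0n : astar d0 ∉ Abar := by rw [hd0]; exact ha0nA
  have hd0mem : astar d0 ∈ Astar \ Abar := by rw [hd0]; exact ha0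
  -- key per-policy bound
  have key : ∀ p : Fin K → ℝ, (∀ a, 0 ≤ p a) → ∑ a, p a = 1 →
      (∀ a ∈ Astar \ Abar, p a = 0) → NSW p s ≤ 1 - 2 * ε * (1 - p m) := by
    intro p hp0 hp1 hpbad
    have hfac0 : ∀ d, 0 ≤ ∑ a, p a * s d a := by
      intro d
      exact Finset.sum_nonneg fun a _ => mul_nonneg (hp0 a) (hs01 d a).1
    have hfac1 : ∀ d, ∑ a, p a * s d a ≤ 1 := by
      intro d
      calc ∑ a, p a * s d a ≤ ∑ a, p a * 1 := by
            apply Finset.sum_le_sum; intro a _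
            exact mul_le_mul_of_nonneg_left (hs01 d a).2 (hp0 a)
        _ = 1 := by simpa using hp1
    have herase : ∑ a ∈ Finset.univ.erase m, p a = 1 - p m := by
      have h := Finset.sum_erase_add Finset.univ p (Finset.mem_univ m)
      rw [hp1] at h
      linarith
    have hfd0 : ∑ a, p a * s d0 a ≤ 1 - 2 * ε * (1 - p m) := by
      obtain ⟨h1, h2, h3, h4⟩ := hbad d0 hd0n
      have hsplit : ∑ a, p a * s d0 a
          = (∑ a ∈ Finset.univ.erase m, p a * s d0 a) + p m * s d0 m :=
        (Finset.sum_erase_add Finset.univ _ (Finset.mem_univ m)).symm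
      have hterm : ∀ a ∈ Finset.univ.erase m, p a * s d0 a ≤ p a * (1 - 2 * ε) := by
        intro a ha
        have ham : a ≠ m := (Finset.mem_erase.mp ha).1
        by_cases haA : a ∈ Abar
        · rw [h3 a haA ham]
          exact mul_le_mul_of_nonneg_left (by linarith) (hp0 a)
        · by_cases hae : a = astar d0
          · have : p a = 0 := by rw [hae]; exact hpbad _ hd0mem
            rw [this]; norm_num
          · rw [h4 a haA hae]
            have := hp0 a
            nlinarith
      have hE : ∑ a ∈ Finset.univ.erase m, p a * s d0 a
          ≤ (1 - 2 * ε) * (1 - p m) := by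
        calc ∑ a ∈ Finset.univ.erase m, p a * s d0 a
            ≤ ∑ a ∈ Finset.univ.erase m, p a * (1 - 2 * ε) :=
              Finset.sum_le_sum hterm
          _ = (1 - 2 * ε) * (1 - p m) := by
              rw [← Finset.sum_mul, herase]; ring
      have hmterm : p m * s d0 m ≤ p m := by
        rw [h2]
        nlinarith [hp0 m]
      rw [hsplit]
      nlinarith
    have hprod : NSW p s = (∑ a, p a * s d0 a) * ∏ d ∈ Finset.univ.erase d0, ∑ a, p a * s d a := by
      unfold NSW
      exact (Finset.mul_prod_erase Finset.univ _ (Finset.mem_univ d0)).symm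
    have hrest : ∏ d ∈ Finset.univ.erase d0, ∑ a, p a * s d a ≤ 1 :=
      Finset.prod_le_one (fun d _ => hfac0 d) (fun d _ => hfac1 d)
    have hrest0 : 0 ≤ ∏ d ∈ Finset.univ.erase d0, ∑ a, p a * s d a :=
      Finset.prod_nonneg (fun d _ => hfac0 d)
    calc NSW p s = (∑ a, p a * s d0 a) * ∏ d ∈ Finset.univ.erase d0, ∑ a, p a * s d a := hprod
      _ ≤ (∑ a, p a * s d0 a) * 1 := mul_le_mul_of_nonneg_left hrest (hfac0 d0)
      _ = ∑ a, p a * s d0 a := by ring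
      _ ≤ 1 - 2 * ε * (1 - p m) := hfd0
  have k1 := key π hπ0 hπ1 hπbad
  have k2 := key π' hπ'0 hπ'1 hπ'bad
  linarith
end
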